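/- Consider the quadratic game min_θ max_φ θᵀAθ + φᵀBφ + θᵀCφ with A ∈ ℝ^{n×n} symmetric positive definite, B ∈ ℝ^{n×n} symmetric negative definite, and C ∈ ℝ^{n×n} full rank, whose stationary point is the origin. For any η > 0, if (θ_{t+1}, φ_{t+1}) satisfies the SPPM equations θ_{t+1} = θ_t − ηAθ_t − ηCφ_{t+1} and φ_{t+1} = φ_t + ηBφ_t + ηCᵀθ_{t+1}, then ‖θ_{t+1}‖² + ‖φ_{t+1}‖² ≤ (‖I_n − ηA‖_op² ‖θ_t‖² + ‖I_n + ηB‖_op² ‖φ_t‖²) / (1 + η² λ_min(CᵀC)), where ‖·‖_op is the operator norm (equal to the spectral radius for symmetric matrices) and λ_min(CᵀC) > 0 is the smallest eigenvalue of CᵀC. -/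

import Mathlib

open Matrix Filter Topology

/-- The squared Euclidean norm of a vector `v : ι → ℝ`. -/
noncomputable def eNormSq {ι : Type*} [Fintype ι] (v : ι → ℝ) : ℝ :=
  ‖(EuclideanSpace.equiv ι ℝ).symm v‖ ^ 2

/-!
Write the step as `(I - ηA)θ = θ' + ηCφ'` and `(I + ηB)φ = φ' - ηCᵀθ'`. The map
`(x, y) ↦ (x + ηCy, y - ηCᵀx)` is `I + ηK` with `K` skew-symmetric, so squaring norms kills the
cross terms: `‖(I - ηA)θ‖² + ‖(I + ηB)φ‖² = ‖θ'‖² + ‖φ'‖² + η²(‖Cφ'‖² + ‖Cᵀθ'‖²)`.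
The left side is at most the operator-norm bound, and both `‖Cφ'‖²` and `‖Cᵀθ'‖²` are at least
`λ_min` times `‖φ'‖²`, resp. `‖θ'‖²`, because `CᵀC` and `CCᵀ` have the same characteristic
polynomial, hence the same eigenvalues.
-/

lemma eNormSq_eq_dotProduct {ι : Type*} [Fintype ι] (v : ι → ℝ) : eNormSq v = v ⬝ᵥ v := by
  rw [eNormSq, ← real_inner_self_eq_norm_sq, EuclideanSpace.inner_eq_star_dotProduct]
  simp

namespace Matrix

variable {ι : Type*} [Fintype ι]

lemma mulVec_dotProduct_self_le [DecidableEq ι] (M : Matrix ι ι ℝ) (v : ι → ℝ) :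
    (M *ᵥ v) ⬝ᵥ (M *ᵥ v) ≤ ‖toEuclideanCLM (𝕜 := ℝ) M‖ ^ 2 * (v ⬝ᵥ v) := by
  rw [← eNormSq_eq_dotProduct, ← eNormSq_eq_dotProduct, eNormSq, eNormSq, ← mul_pow]
  gcongr
  exact (toEuclideanCLM (𝕜 := ℝ) M).le_opNorm _

lemma dotProduct_transpose_mul_mulVec {m : Type*} [Fintype m] (C : Matrix m ι ℝ) (x : ι → ℝ) :
    x ⬝ᵥ ((Cᵀ * C) *ᵥ x) = (C *ᵥ x) ⬝ᵥ (C *ᵥ x) := by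
  rw [← mulVec_mulVec, dotProduct_mulVec, vecMul_transpose]

lemma dotProduct_self_add_dotProduct_self_skew {m : Type*} [Fintype m] (C : Matrix ι m ℝ) (η : ℝ)
    (x : ι → ℝ) (y : m → ℝ) :
    (x + η • (C *ᵥ y)) ⬝ᵥ (x + η • (C *ᵥ y)) + (y - η • (Cᵀ *ᵥ x)) ⬝ᵥ (y - η • (Cᵀ *ᵥ x)) =
      x ⬝ᵥ x + y ⬝ᵥ y + η ^ 2 * ((C *ᵥ y) ⬝ᵥ (C *ᵥ y) + (Cᵀ *ᵥ x) ⬝ᵥ (Cᵀ *ᵥ x)) := by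
  have hcross : x ⬝ᵥ (C *ᵥ y) = y ⬝ᵥ (Cᵀ *ᵥ x) := by
    rw [dotProduct_mulVec, ← mulVec_transpose, dotProduct_comm]
  simp only [dotProduct_add, add_dotProduct, dotProduct_sub, sub_dotProduct, dotProduct_smul,
    smul_dotProduct, smul_eq_mul, dotProduct_comm _ x, dotProduct_comm _ y, hcross]
  ring

variable [DecidableEq ι]

open scoped MatrixOrder in
lemma IsHermitian.mul_dotProduct_self_le {H : Matrix ι ι ℝ} (hH : H.IsHermitian) {l : ℝ}
    (hl : ∀ i, l ≤ hH.eigenvalues i) (x : ι → ℝ) :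
    l * (x ⬝ᵥ x) ≤ x ⬝ᵥ (H *ᵥ x) := by
  have hle : algebraMap ℝ _ l ≤ H := by
    rw [algebraMap_le_iff_le_spectrum, hH.spectrum_real_eq_range_eigenvalues]
    rintro _ ⟨i, rfl⟩
    exact hl i
  simpa [Algebra.algebraMap_eq_smul_one, sub_mulVec, smul_mulVec, dotProduct_sub]
    using hle.dotProduct_mulVec_nonneg x

lemma IsHermitian.eigenvalues_mul_comm {C D : Matrix ι ι ℝ} (hCD : (C * D).IsHermitian)
    (hDC : (D * C).IsHermitian) : hCD.eigenvalues = hDC.eigenvalues :=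
  (hCD.eigenvalues_eq_eigenvalues_iff hDC).2 (charpoly_mul_comm C D)

lemma mul_dotProduct_self_le_mulVec_dotProduct_self {C : Matrix ι ι ℝ}
    (hC : (Cᵀ * C).IsHermitian) {l : ℝ} (hl : ∀ i, l ≤ hC.eigenvalues i) (x : ι → ℝ) :
    l * (x ⬝ᵥ x) ≤ (C *ᵥ x) ⬝ᵥ (C *ᵥ x) :=
  dotProduct_transpose_mul_mulVec C x ▸ hC.mul_dotProduct_self_le hl x

lemma mul_dotProduct_self_le_transpose_mulVec_dotProduct_self {C : Matrix ι ι ℝ}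
    (hC : (Cᵀ * C).IsHermitian) {l : ℝ} (hl : ∀ i, l ≤ hC.eigenvalues i) (x : ι → ℝ) :
    l * (x ⬝ᵥ x) ≤ (Cᵀ *ᵥ x) ⬝ᵥ (Cᵀ *ᵥ x) := by
  have hC' : (Cᵀᵀ * Cᵀ).IsHermitian := by simpa using isHermitian_mul_conjTranspose_self C
  refine mul_dotProduct_self_le_mulVec_dotProduct_self hC' (fun i => ?_) x
  rw [IsHermitian.eigenvalues_mul_comm hC' hC]
  exact hl i

lemma IsHermitian.eigenvalues_transpose_mul_self_nonneg {C : Matrix ι ι ℝ}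
    (hC : (Cᵀ * C).IsHermitian) (i : ι) : 0 ≤ hC.eigenvalues i :=
  (by simpa using posSemidef_conjTranspose_mul_self C : (Cᵀ * C).PosSemidef).eigenvalues_nonneg i

end Matrix

theorem quadratic_sppm_contraction_general
    (n : ℕ) (A B C : Matrix (Fin n) (Fin n) ℝ)
    (η : ℝ)
    (hCtC : (Cᵀ * C).IsHermitian) (lmin : ℝ)
    (hlmin : IsLeast (Set.range hCtC.eigenvalues) lmin)
    (θ θ' φ φ' : Fin n → ℝ)
    (hθ' : θ' = θ - η • (A *ᵥ θ) - η • (C *ᵥ φ'))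
    (hφ' : φ' = φ + η • (B *ᵥ φ) + η • (Cᵀ *ᵥ θ')) :
    eNormSq θ' + eNormSq φ' ≤
      (‖Matrix.toEuclideanCLM (𝕜 := ℝ) ((1 : Matrix (Fin n) (Fin n) ℝ) - η • A)‖ ^ 2 * eNormSq θ +
       ‖Matrix.toEuclideanCLM (𝕜 := ℝ) ((1 : Matrix (Fin n) (Fin n) ℝ) + η • B)‖ ^ 2 * eNormSq φ) /
        (1 + η ^ 2 * lmin) := by
  have hl : ∀ i, lmin ≤ hCtC.eigenvalues i := fun i => hlmin.2 ⟨i, rfl⟩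
  have hl_nonneg : 0 ≤ lmin := by
    obtain ⟨i, rfl⟩ := hlmin.1
    exact hCtC.eigenvalues_transpose_mul_self_nonneg i
  have hθ : (1 - η • A) *ᵥ θ = θ' + η • (C *ᵥ φ') := by
    rw [sub_mulVec, one_mulVec, smul_mulVec, hθ']; abel
  have hφ : (1 + η • B) *ᵥ φ = φ' - η • (Cᵀ *ᵥ θ') := by
    rw [add_mulVec, one_mulVec, smul_mulVec, hφ']; abel
  have henergy := dotProduct_self_add_dotProduct_self_skew C η θ' φ'
  rw [← hθ, ← hφ] at henergy
  have hCφ := mul_le_mul_of_nonneg_left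
    (mul_dotProduct_self_le_mulVec_dotProduct_self hCtC hl φ') (sq_nonneg η)
  have hCθ := mul_le_mul_of_nonneg_left
    (mul_dotProduct_self_le_transpose_mulVec_dotProduct_self hCtC hl θ') (sq_nonneg η)
  have hθ_op := mulVec_dotProduct_self_le (1 - η • A) θ
  have hφ_op := mulVec_dotProduct_self_le (1 + η • B) φ
  simp only [eNormSq_eq_dotProduct]
  rw [le_div_iff₀ (by positivity)]
  linarith

/-- one-step contraction of SPPM in the quadratic game (Theorem 4 of the paper). -/
theorem quadratic_sppm_contraction
    (n : ℕ) (A B C : Matrix (Fin n) (Fin n) ℝ)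
    (hA : A.PosDef) (hB : (-B).PosDef) (hC : IsUnit C)
    (η : ℝ) (hη : 0 < η)
    (hCtC : (Cᵀ * C).IsHermitian) (lmin : ℝ)
    (hlmin : IsLeast (Set.range hCtC.eigenvalues) lmin)
    (θ θ' φ φ' : Fin n → ℝ)
    (hθ' : θ' = θ - η • (A *ᵥ θ) - η • (C *ᵥ φ'))
    (hφ' : φ' = φ + η • (B *ᵥ φ) + η • (Cᵀ *ᵥ θ')) :
    eNormSq θ' + eNormSq φ' ≤
      (‖Matrix.toEuclideanCLM (𝕜 := ℝ) ((1 : Matrix (Fin n) (Fin n) ℝ) - η • A)‖ ^ 2 * eNormSq θ +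
       ‖Matrix.toEuclideanCLM (𝕜 := ℝ) ((1 : Matrix (Fin n) (Fin n) ℝ) + η • B)‖ ^ 2 * eNormSq φ) /
        (1 + η ^ 2 * lmin) :=
  quadratic_sppm_contraction_general n A B C η hCtC lmin hlmin θ θ' φ φ' hθ' hφ'
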